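/- Assume inf_{x,y∈S} κ(x,y) > 0, ∫_S e^{a ψ(x)} dμ(x) < ∞ for some a > 0 where ψ(x) = (∫_S κ(x,y)² dμ(y))^{1/2}, and ‖T_κ‖_HS < 1. Then there exist z > 1 and a μ-a.e. finite measurable function f ≥ 1 satisfying f = z·e^{T_κ[f−1]} μ-a.e. -/

import Mathlib

/-!
Take `G = exp (c ψ)` for a small `c > 0`. For `c ≤ a / 4` one has
`(e^{cψ} - 1)² ≤ c² ψ² + O(c³) e^{aψ}`, and `∫ ψ² = ‖T_κ‖²_HS < 1`, so `‖G - 1‖₂ = m < c` once `c`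
is small. By Cauchy–Schwarz `T_κ[G - 1] ≤ m ψ`, and since `ψ ≥ b` (a lower bound of `κ`), the
choice `z = e^{(c - m) b} > 1` makes `G` a supersolution: `Φ G ≤ G`. As `Φ` is monotone and
commutes with increasing limits of measurable functions (monotone convergence and continuity of
`exp` on `[0, ∞]`), the iterates `Φⁿ 0` increase to a measurable fixed point `f ≤ G`, and `f ≥ 1`
because `Φ` only takes values `≥ z`.
-/

open MeasureTheory Filter
open scoped ENNReal

/-- Extended exponential on `ℝ≥0∞`, with `eexp ⊤ = ⊤`. -/
noncomputable def eexp (t : ℝ≥0∞) : ℝ≥0∞ :=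
  if t = ⊤ then ⊤ else ENNReal.ofReal (Real.exp t.toReal)

/-- The nonlinear operator `Φ_{z,κ}[f](x) = z·exp(T_κ[f-1](x))`. -/
noncomputable def Phi {S : Type*} [MeasurableSpace S] (μ : Measure S)
    (κ : S → S → ℝ) (z : ℝ) (f : S → ℝ≥0∞) : S → ℝ≥0∞ :=
  fun x => ENNReal.ofReal z * eexp (∫⁻ y, ENNReal.ofReal (κ x y) * (f y - 1) ∂μ)

open Real Topology

lemma eexp_eq_exp_coe (t : ℝ≥0∞) : eexp t = EReal.exp t := by
  rcases eq_or_ne t ⊤ with rfl | ht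
  · simp [eexp]
  · lift t to NNReal using ht
    simp [eexp, EReal.coe_nnreal_eq_coe_real]

lemma monotone_eexp : Monotone eexp := fun _ _ h => by
  simpa only [eexp_eq_exp_coe] using EReal.exp_monotone (EReal.coe_ennreal_le_coe_ennreal_iff.2 h)

lemma continuous_eexp : Continuous eexp := by
  rw [funext eexp_eq_exp_coe]
  exact ENNReal.continuous_exp.comp continuous_coe_ennreal_ereal

lemma one_le_eexp (t : ℝ≥0∞) : 1 ≤ eexp t := by
  simp [eexp_eq_exp_coe, EReal.coe_ennreal_nonneg]

lemma eexp_ofReal {r : ℝ} (hr : 0 ≤ r) : eexp (ENNReal.ofReal r) = ENNReal.ofReal (exp r) := by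
  rw [eexp, if_neg ENNReal.ofReal_ne_top, ENNReal.toReal_ofReal hr]

lemma eexp_iSup {ι : Sort*} [Nonempty ι] (g : ι → ℝ≥0∞) : eexp (⨆ i, g i) = ⨆ i, eexp (g i) :=
  monotone_eexp.map_ciSup_of_continuousAt continuous_eexp.continuousAt

section Phi

variable {S : Type*} [MeasurableSpace S] (μ : Measure S) (κ : S → S → ℝ) (z : ℝ)

lemma monotone_Phi : Monotone (Phi μ κ z) := fun _ _ h _ =>
  mul_le_mul_right (monotone_eexp (lintegral_mono fun y =>
    mul_le_mul_right (tsub_le_tsub_right (h y) 1) _)) _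

lemma one_le_Phi (hz : 1 ≤ z) (f : S → ℝ≥0∞) : 1 ≤ Phi μ κ z f := fun _ =>
  one_le_mul (ENNReal.one_le_ofReal.2 hz) (one_le_eexp _)

variable {κ}

lemma Phi_iSup (hκ : Measurable (Function.uncurry κ)) {g : ℕ → S → ℝ≥0∞}
    (hg : ∀ n, Measurable (g n)) (hmono : Monotone g) :
    Phi μ κ z (⨆ n, g n) = ⨆ n, Phi μ κ z (g n) := by
  ext x
  simp only [Phi, iSup_apply, ENNReal.iSup_sub, ENNReal.mul_iSup]
  rw [lintegral_iSup (f := fun n y => ENNReal.ofReal (κ x y) * (g n y - 1))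
      (fun n => hκ.of_uncurry_left.ennreal_ofReal.mul ((hg n).sub measurable_const))
      (fun _ _ h y => mul_le_mul_right (tsub_le_tsub_right (hmono h y) 1) _),
    eexp_iSup, ENNReal.mul_iSup]

variable [SFinite μ]

lemma measurable_Phi (hκ : Measurable (Function.uncurry κ)) {f : S → ℝ≥0∞} (hf : Measurable f) :
    Measurable (Phi μ κ z f) :=
  (continuous_eexp.measurable.comp (Measurable.lintegral_prod_right'
    (hκ.ennreal_ofReal.mul ((hf.comp measurable_snd).sub measurable_const)))).const_mul _

lemma exists_fixedPoint_Phi_le (hκ : Measurable (Function.uncurry κ)) (hz : 1 ≤ z)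
    {G : S → ℝ≥0∞} (hG : Phi μ κ z G ≤ G) :
    ∃ f, Measurable f ∧ f ≤ G ∧ 1 ≤ f ∧ Phi μ κ z f = f := by
  set F : ℕ → S → ℝ≥0∞ := fun n => (Phi μ κ z)^[n] 0
  have hF_mono : Monotone F := (monotone_Phi μ κ z).monotone_iterate_of_le_map bot_le
  have hF_meas : ∀ n, Measurable (F n) := by
    intro n
    induction n with
    | zero => exact measurable_const
    | succ n ih => simpa only [F, Function.iterate_succ_apply'] using measurable_Phi μ z hκ ih
  have hF_le : ∀ n, F n ≤ G := by
    intro n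
    induction n with
    | zero => exact bot_le
    | succ n ih =>
      simpa only [F, Function.iterate_succ_apply'] using (monotone_Phi μ κ z ih).trans hG
  have hfix : Phi μ κ z (⨆ n, F n) = ⨆ n, F n := by
    rw [Phi_iSup μ z hκ hF_meas hF_mono, ← hF_mono.iSup_nat_add 1]
    simp only [F, Function.iterate_succ_apply']
  exact ⟨⨆ n, F n, by simpa only [← iSup_apply] using Measurable.iSup hF_meas, iSup_le hF_le,
    hfix ▸ one_le_Phi μ κ z hz _, hfix⟩

end Phi

lemma Real.exp_sub_one_le_mul_exp (s : ℝ) : exp s - 1 ≤ s * exp s := by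
  have h := mul_le_mul_of_nonneg_left (one_sub_le_exp_neg s) (exp_pos s).le
  rw [← exp_add, add_neg_cancel, exp_zero] at h
  linarith

lemma Real.pow_three_le_mul_exp {a t : ℝ} (ha : 0 < a) (ht : 0 ≤ t) :
    t ^ 3 ≤ 48 / a ^ 3 * exp (a * t / 2) := by
  have h := pow_div_factorial_le_exp (x := a * t / 2) (by positivity) 3
  rw [div_mul_eq_mul_div, le_div_iff₀ (by positivity)]
  norm_num [Nat.factorial] at h
  nlinarith

lemma Real.sq_exp_mul_sub_one_le {a c t : ℝ} (ha : 0 < a) (hc : 0 ≤ c) (hca : c ≤ a / 4)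
    (ht : 0 ≤ t) : (exp (c * t) - 1) ^ 2 ≤ c ^ 2 * t ^ 2 + c ^ 3 * (96 / a ^ 3) * exp (a * t) := by
  have hct : 0 ≤ c * t := by positivity
  have h2ct : exp (2 * (c * t)) ≤ exp (a * t / 2) := exp_le_exp.2 (by nlinarith)
  have hsq : exp (c * t) ^ 2 = exp (2 * (c * t)) := by rw [← exp_nat_mul]; norm_num
  have hhalf : exp (a * t / 2) * exp (a * t / 2) = exp (a * t) := by rw [← exp_add]; ring_nf
  calc (exp (c * t) - 1) ^ 2 ≤ (c * t * exp (c * t)) ^ 2 :=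
        pow_le_pow_left₀ (by linarith [add_one_le_exp (c * t)]) (exp_sub_one_le_mul_exp _) 2
    _ = c ^ 2 * (t ^ 2 * exp (2 * (c * t))) := by rw [← hsq]; ring
    _ ≤ c ^ 2 * (t ^ 2 * (1 + 2 * (c * t) * exp (a * t / 2))) := by
        gcongr
        linarith [exp_sub_one_le_mul_exp (2 * (c * t)),
          mul_le_mul_of_nonneg_left h2ct (by positivity : 0 ≤ 2 * (c * t))]
    _ = c ^ 2 * t ^ 2 + c ^ 3 * 2 * (t ^ 3 * exp (a * t / 2)) := by ring
    _ ≤ c ^ 2 * t ^ 2 + c ^ 3 * 2 * (48 / a ^ 3 * exp (a * t / 2) * exp (a * t / 2)) := by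
        gcongr
        exact pow_three_le_mul_exp ha ht
    _ = c ^ 2 * t ^ 2 + c ^ 3 * (96 / a ^ 3) * exp (a * t) := by
        rw [mul_assoc _ (exp _), hhalf]; ring

section Integrals

variable {S : Type*} [MeasurableSpace S] {μ : Measure S}

lemma lintegral_mul_le_of_lintegral_sq_le {f g : S → ℝ≥0∞} (hf : AEMeasurable f μ)
    (hg : AEMeasurable g μ) {A B : ℝ} (hA : 0 ≤ A) (hB : 0 ≤ B)
    (hfA : ∫⁻ x, f x ^ 2 ∂μ ≤ ENNReal.ofReal (A ^ 2))
    (hgB : ∫⁻ x, g x ^ 2 ∂μ ≤ ENNReal.ofReal (B ^ 2)) :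
    ∫⁻ x, f x * g x ∂μ ≤ ENNReal.ofReal (A * B) := by
  have hsqrt {C : ℝ} (hC : 0 ≤ C) : ENNReal.ofReal (C ^ 2) ^ (1 / 2 : ℝ) = ENNReal.ofReal C := by
    rw [ENNReal.ofReal_rpow_of_nonneg (by positivity) (by norm_num), ← sqrt_eq_rpow, sqrt_sq hC]
  calc ∫⁻ x, f x * g x ∂μ
      ≤ (∫⁻ x, f x ^ (2 : ℝ) ∂μ) ^ (1 / 2 : ℝ) * (∫⁻ x, g x ^ (2 : ℝ) ∂μ) ^ (1 / 2 : ℝ) :=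
        ENNReal.lintegral_mul_le_Lp_mul_Lq μ .two_two hf hg
    _ ≤ ENNReal.ofReal (A ^ 2) ^ (1 / 2 : ℝ) * ENNReal.ofReal (B ^ 2) ^ (1 / 2 : ℝ) := by
        simp only [ENNReal.rpow_two]
        gcongr
    _ = ENNReal.ofReal (A * B) := by rw [hsqrt hA, hsqrt hB, ENNReal.ofReal_mul hA]

lemma exists_lintegral_sq_exp_mul_sub_one_le {ψ : S → ℝ} {a : ℝ} (ha : 0 < a)
    (hψ0 : ∀ x, 0 ≤ ψ x) (hψ2 : Integrable (fun x => ψ x ^ 2) μ) (hψ2_lt : ∫ x, ψ x ^ 2 ∂μ < 1)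
    (hexp : Integrable (fun x => exp (a * ψ x)) μ) :
    ∃ c m : ℝ, 0 ≤ m ∧ m < c ∧
      ∫⁻ x, (ENNReal.ofReal (exp (c * ψ x)) - 1) ^ 2 ∂μ ≤ ENNReal.ofReal (m ^ 2) := by
  set q := ∫ x, ψ x ^ 2 ∂μ
  set E := ∫ x, exp (a * ψ x) ∂μ
  set K := 96 / a ^ 3
  have hq0 : 0 ≤ q := integral_nonneg fun x => sq_nonneg _
  have hE0 : 0 ≤ E := integral_nonneg fun x => (exp_pos _).le
  have hsmall : ∀ᶠ c in 𝓝[>] (0 : ℝ), c ≤ a / 4 ∧ c * (K * E) < 1 - q := by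
    refine nhdsWithin_le_nhds ((ge_mem_nhds (by positivity)).and ?_)
    exact (continuous_id.mul continuous_const).tendsto' 0 0 (zero_mul _) |>.eventually
      (gt_mem_nhds (by linarith))
  obtain ⟨c, ⟨hca, hcKE⟩, hc0 : 0 < c⟩ := (hsmall.and self_mem_nhdsWithin).exists
  have hr0 : 0 ≤ q + c * (K * E) := by positivity
  refine ⟨c, c * √(q + c * (K * E)), by positivity, ?_, ?_⟩
  · calc c * √(q + c * (K * E)) < c * 1 := by
          gcongr
          rw [sqrt_lt' one_pos]
          linarith
      _ = c := mul_one c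
  · have hbound : Integrable (fun x => c ^ 2 * ψ x ^ 2 + c ^ 3 * K * exp (a * ψ x)) μ :=
      (hψ2.const_mul _).add (hexp.const_mul _)
    calc ∫⁻ x, (ENNReal.ofReal (exp (c * ψ x)) - 1) ^ 2 ∂μ
        = ∫⁻ x, ENNReal.ofReal ((exp (c * ψ x) - 1) ^ 2) ∂μ := by
          refine lintegral_congr fun x => ?_
          rw [← ENNReal.ofReal_one, ← ENNReal.ofReal_sub _ zero_le_one, ENNReal.ofReal_pow]
          linarith [one_le_exp (mul_nonneg hc0.le (hψ0 x))]
      _ ≤ ∫⁻ x, ENNReal.ofReal (c ^ 2 * ψ x ^ 2 + c ^ 3 * K * exp (a * ψ x)) ∂μ :=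
          lintegral_mono fun x => ENNReal.ofReal_le_ofReal
            (sq_exp_mul_sub_one_le ha hc0.le hca (hψ0 x))
      _ = ENNReal.ofReal (c ^ 2 * q + c ^ 3 * K * E) := by
          rw [← ofReal_integral_eq_lintegral_ofReal hbound (ae_of_all _ fun x => by positivity),
            integral_add (hψ2.const_mul _) (hexp.const_mul _), integral_const_mul,
            integral_const_mul]
      _ = ENNReal.ofReal ((c * √(q + c * (K * E))) ^ 2) := by
          rw [mul_pow, sq_sqrt hr0]
          ring_nf

lemma le_sqrt_integral_sq [IsProbabilityMeasure μ] {f : S → ℝ} {b : ℝ} (hb : 0 ≤ b)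
    (hbf : ∀ y, b ≤ f y) (hf : Integrable (fun y => f y ^ 2) μ) : b ≤ √(∫ y, f y ^ 2 ∂μ) := by
  refine le_sqrt_of_sq_le ?_
  calc b ^ 2 = ∫ _, b ^ 2 ∂μ := by simp
    _ ≤ ∫ y, f y ^ 2 ∂μ := integral_mono (integrable_const _) hf fun y => by
        gcongr
        exact hbf y

lemma lintegral_ofReal_sq {f : S → ℝ} (hf0 : ∀ y, 0 ≤ f y) (hf : Integrable (fun y => f y ^ 2) μ) :
    ∫⁻ y, ENNReal.ofReal (f y) ^ 2 ∂μ = ENNReal.ofReal (∫ y, f y ^ 2 ∂μ) := by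
  simp_rw [← ENNReal.ofReal_pow (hf0 _)]
  exact (ofReal_integral_eq_lintegral_ofReal hf (ae_of_all _ fun y => sq_nonneg _)).symm

lemma integrable_and_integral_lt_of_lintegral_lt {f : S → ℝ} (hf : AEStronglyMeasurable f μ)
    (hf0 : ∀ x, 0 ≤ f x) {r : ℝ} (h : ∫⁻ x, ENNReal.ofReal (f x) ∂μ < ENNReal.ofReal r) :
    Integrable f μ ∧ ∫ x, f x ∂μ < r := by
  have hfi : Integrable f μ :=
    ⟨hf, (hasFiniteIntegral_iff_ofReal (ae_of_all _ hf0)).2 (h.trans ENNReal.ofReal_lt_top)⟩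
  rw [← ofReal_integral_eq_lintegral_ofReal hfi (ae_of_all _ hf0),
    ENNReal.ofReal_lt_ofReal_iff'] at h
  exact ⟨hfi, h.1⟩

lemma measurable_sqrt_integral_sq [SFinite μ] {κ : S → S → ℝ}
    (hκ : Measurable (Function.uncurry κ)) : Measurable fun x => √(∫ y, κ x y ^ 2 ∂μ) :=
  (StronglyMeasurable.integral_prod_right (hκ.pow_const 2).stronglyMeasurable).measurable.sqrt

end Integrals

lemma Phi_le_of_lintegral_le {S : Type*} [MeasurableSpace S] {μ : Measure S} {κ : S → S → ℝ}
    {ψ : S → ℝ} {b c m : ℝ} (hb : 0 ≤ b) (hbψ : ∀ x, b ≤ ψ x) (hm0 : 0 ≤ m) (hmc : m ≤ c)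
    (hT : ∀ x, ∫⁻ y, ENNReal.ofReal (κ x y) * (ENNReal.ofReal (exp (c * ψ y)) - 1) ∂μ ≤
      ENNReal.ofReal (ψ x * m)) :
    Phi μ κ (exp ((c - m) * b)) (fun x => ENNReal.ofReal (exp (c * ψ x))) ≤
      fun x => ENNReal.ofReal (exp (c * ψ x)) := fun x => by
  have hψm : 0 ≤ ψ x * m := mul_nonneg (hb.trans (hbψ x)) hm0
  calc Phi μ κ (exp ((c - m) * b)) (fun x => ENNReal.ofReal (exp (c * ψ x))) x
      ≤ ENNReal.ofReal (exp ((c - m) * b)) * ENNReal.ofReal (exp (ψ x * m)) :=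
        mul_le_mul_right (eexp_ofReal hψm ▸ monotone_eexp (hT x)) _
    _ = ENNReal.ofReal (exp ((c - m) * b + ψ x * m)) := by
        rw [← ENNReal.ofReal_mul (exp_pos _).le, exp_add]
    _ ≤ ENNReal.ofReal (exp (c * ψ x)) := by
        gcongr
        nlinarith [mul_nonneg (sub_nonneg.2 hmc) (sub_nonneg.2 (hbψ x))]

theorem stmt5_general {S : Type*} [MeasurableSpace S]
    (μ : Measure S) [IsProbabilityMeasure μ]
    (κ : S → S → ℝ) (hκmeas : Measurable (Function.uncurry κ))
    (hκinf : ∃ b : ℝ, 0 < b ∧ ∀ x y, b ≤ κ x y)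
    (hκ2 : ∀ x, Integrable (fun y => κ x y ^ 2) μ)
    (ψ : S → ℝ) (hψ : ∀ x, ψ x = Real.sqrt (∫ y, κ x y ^ 2 ∂μ))
    (a : ℝ) (ha : 0 < a)
    (hexp : Integrable (fun x => Real.exp (a * ψ x)) μ)
    (hHS : (∫⁻ x, ∫⁻ y, ENNReal.ofReal (κ x y) ^ 2 ∂μ ∂μ) ^ ((1 : ℝ) / 2) < 1) :
    ∃ z : ℝ, 1 < z ∧ ∃ f : S → ℝ≥0∞, Measurable f ∧ (∀ x, 1 ≤ f x) ∧
      (∀ᵐ x ∂μ, f x ≠ ⊤) ∧ (∀ᵐ x ∂μ, Phi μ κ z f x = f x) := by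
  obtain ⟨b, hb, hbκ⟩ := hκinf
  have hψ0 (x : S) : 0 ≤ ψ x := hψ x ▸ sqrt_nonneg _
  have hbψ (x : S) : b ≤ ψ x := hψ x ▸ le_sqrt_integral_sq hb.le (hbκ x) (hκ2 x)
  have hκψ (x : S) : ∫⁻ y, ENNReal.ofReal (κ x y) ^ 2 ∂μ = ENNReal.ofReal (ψ x ^ 2) := by
    rw [lintegral_ofReal_sq (fun y => hb.le.trans (hbκ x y)) (hκ2 x), hψ x,
      sq_sqrt (integral_nonneg fun y => sq_nonneg _)]
  have hψ_meas : Measurable ψ := funext hψ ▸ measurable_sqrt_integral_sq hκmeas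
  have hψ2_lintegral_lt : ∫⁻ x, ENNReal.ofReal (ψ x ^ 2) ∂μ < ENNReal.ofReal 1 := by
    simp_rw [← hκψ, ENNReal.ofReal_one]
    by_contra! h
    exact hHS.not_ge (ENNReal.one_le_rpow h (by norm_num))
  obtain ⟨hψ2, hψ2_integral_lt⟩ := integrable_and_integral_lt_of_lintegral_lt
    (hψ_meas.pow_const 2).aestronglyMeasurable (fun x => sq_nonneg _) hψ2_lintegral_lt
  obtain ⟨c, m, hm0, hmc, hM⟩ :=
    exists_lintegral_sq_exp_mul_sub_one_le ha hψ0 hψ2 hψ2_integral_lt hexp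
  have hT (x : S) := lintegral_mul_le_of_lintegral_sq_le
    hκmeas.of_uncurry_left.ennreal_ofReal.aemeasurable
    ((hψ_meas.const_mul c).exp.ennreal_ofReal.sub measurable_const).aemeasurable
    (hψ0 x) hm0 (hκψ x).le hM
  have hz : 1 < exp ((c - m) * b) := one_lt_exp_iff.2 (mul_pos (sub_pos.2 hmc) hb)
  obtain ⟨f, hf, hfG, hf1, hfix⟩ :=
    exists_fixedPoint_Phi_le μ _ hκmeas hz.le (Phi_le_of_lintegral_le hb.le hbψ hm0 hmc.le hT)
  exact ⟨_, hz, f, hf, hf1, ae_of_all _ fun x => ne_top_of_le_ne_top ENNReal.ofReal_ne_top (hfG x),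
    ae_of_all _ (congrFun hfix)⟩

theorem stmt5 {S : Type*} [MeasurableSpace S] [MetricSpace S] [BorelSpace S]
    [TopologicalSpace.SeparableSpace S]
    (μ : Measure S) [IsProbabilityMeasure μ]
    (κ : S → S → ℝ) (hκmeas : Measurable (Function.uncurry κ))
    (hκsymm : ∀ x y, κ x y = κ y x)
    (hκinf : ∃ b : ℝ, 0 < b ∧ ∀ x y, b ≤ κ x y)
    (hκ2 : ∀ x, Integrable (fun y => κ x y ^ 2) μ)
    (ψ : S → ℝ) (hψ : ∀ x, ψ x = Real.sqrt (∫ y, κ x y ^ 2 ∂μ))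
    (a : ℝ) (ha : 0 < a)
    (hexp : Integrable (fun x => Real.exp (a * ψ x)) μ)
    (hHS : (∫⁻ x, ∫⁻ y, ENNReal.ofReal (κ x y) ^ 2 ∂μ ∂μ) ^ ((1 : ℝ) / 2) < 1) :
    ∃ z : ℝ, 1 < z ∧ ∃ f : S → ℝ≥0∞, Measurable f ∧ (∀ x, 1 ≤ f x) ∧
      (∀ᵐ x ∂μ, f x ≠ ⊤) ∧ (∀ᵐ x ∂μ, Phi μ κ z f x = f x) :=
  stmt5_general μ κ hκmeas hκinf hκ2 ψ hψ a ha hexp hHS
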